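/- Let N > 4 and 0 < m < (N-4)/(N-2), and set α = (N-2)(1-m)/2 - 1, |γ| = 1/(N-2-Nm), C* = 2m(N-2-Nm)/(1-m). Fix k > 0 and let B̃(x) = (C*/(k+|x|²))^{1/(1-m)}. Then for every x ∈ ℝ^N the identity (m(|x|²+k)/C*)·Δ(B̃^α)(x) - |γ|·x·∇(B̃^α)(x) = -(k(N-4-m(N-2))N / (2(N(1-m)-2)(k+|x|²)))·B̃^α(x) holds, and the right-hand side is strictly negative. In particular, for any function a on ℝ^N satisfying a(x) ≥ m(|x|²+k)/C*, one has a(x)·Δ(B̃^α)(x) - |γ|·x·∇(B̃^α)(x) ≤ -(k(N-4-m(N-2))N / (2(N(1-m)-2)(k+|x|²)))·B̃^α(x) < 0, since Δ(B̃^α) ≤ 0 when α ≤ (1-m)(N-2)/2. -/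

import Mathlib

open MeasureTheory Real Filter Topology RealInnerProductSpace

noncomputable section

abbrev Euc (N : ℕ) := EuclideanSpace ℝ (Fin N)

/-- Laplacian: trace of the second derivative. -/
def lapl {N : ℕ} (f : Euc N → ℝ) (x : Euc N) : ℝ :=
  ∑ i : Fin N, iteratedFDeriv ℝ 2 f x ![EuclideanSpace.single i 1, EuclideanSpace.single i 1]

/-- The constant C* = 2m(N-2-mN)/(1-m). -/
def Cst (N : ℕ) (m : ℝ) : ℝ := 2 * m * ((N : ℝ) - 2 - m * N) / (1 - m)

/-- β = N/(N-2-Nm). -/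
def betaC (N : ℕ) (m : ℝ) : ℝ := (N : ℝ) / ((N : ℝ) - 2 - N * m)

/-- γ = -β/N. -/
def gammaC (N : ℕ) (m : ℝ) : ℝ := -betaC N m / N

/-- Barenblatt solution with extinction time T. -/
def Bb (N : ℕ) (m T k : ℝ) (x : Euc N) (t : ℝ) : ℝ :=
  (Cst N m * (T - t) / (k * (T - t) ^ (2 * gammaC N m) + ‖x‖ ^ 2)) ^ (1 / (1 - m))

/-- Rescaled Barenblatt profile. -/
def BbTil (N : ℕ) (m k : ℝ) (x : Euc N) : ℝ :=
  (Cst N m / (k + ‖x‖ ^ 2)) ^ (1 / (1 - m))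

/-- u is a solution of the fast diffusion equation on ℝ^N × (0,T) with initial value u₀. -/
def IsFDESol (N : ℕ) (m T : ℝ) (u : Euc N → ℝ → ℝ) (u₀ : Euc N → ℝ) : Prop :=
  (∀ x : Euc N, ∀ t ∈ Set.Ioo (0:ℝ) T, 0 < u x t) ∧
  ContDiffOn ℝ (⊤ : ℕ∞) (fun p : Euc N × ℝ => u p.1 p.2) (Set.univ ×ˢ Set.Ioo (0:ℝ) T) ∧
  ContinuousOn (fun p : Euc N × ℝ => u p.1 p.2) (Set.univ ×ˢ Set.Ico (0:ℝ) T) ∧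
  (∀ x, u x 0 = u₀ x) ∧
  (∀ x : Euc N, ∀ t ∈ Set.Ioo (0:ℝ) T,
    deriv (fun s => u x s) t = lapl (fun y => u y t ^ m) x)

/-- Rescaled solution ũ(x,τ) = (T-t)^(-β) u(x (T-t)^γ, t), τ = -log(T-t). -/
def rescaleSol (N : ℕ) (m T : ℝ) (u : Euc N → ℝ → ℝ) (x : Euc N) (τ : ℝ) : ℝ :=
  Real.exp (betaC N m * τ) * u (Real.exp (-gammaC N m * τ) • x) (T - Real.exp (-τ))


lemma hasFDerivAt_aux {N : ℕ} (c q k : ℝ) (x : Euc N) (h0 : (0:ℝ) < k + ‖x‖ ^ 2) :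
    HasFDerivAt (fun y : Euc N => c * (k + ‖y‖ ^ 2) ^ q)
      ((2 * c * q * (k + ‖x‖ ^ 2) ^ (q - 1)) • innerSL ℝ x) x := by
  have h1 : HasFDerivAt (fun y : Euc N => k + ‖y‖ ^ 2) ((2:ℕ) • innerSL ℝ x) x :=
    (hasStrictFDerivAt_norm_sq x).hasFDerivAt.const_add k
  have h2 := (h1.rpow_const (p := q) (Or.inl h0.ne')).const_mul c
  refine h2.congr_fderiv ?_
  ext y
  simp [smul_smul]
  ring

lemma second_aux {N : ℕ} (c q k : ℝ) (hk : (0:ℝ) < k) (x v w : Euc N) :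
    fderiv ℝ (fderiv ℝ (fun y : Euc N => c * (k + ‖y‖ ^ 2) ^ q)) x v w
      = 4*c*q*(q-1)*(k+‖x‖^2)^(q-2) * (inner ℝ x v) * (inner ℝ x w)
        + 2*c*q*(k+‖x‖^2)^(q-1) * (inner ℝ v w : ℝ) := by
  have pos : ∀ y : Euc N, (0:ℝ) < k + ‖y‖ ^ 2 := fun y => by positivity
  have hfd : fderiv ℝ (fun y : Euc N => c * (k + ‖y‖ ^ 2) ^ q)
      = fun y : Euc N => (2 * c * q * (k + ‖y‖ ^ 2) ^ (q - 1)) • innerSL ℝ y :=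
    funext fun y => (hasFDerivAt_aux c q k y (pos y)).fderiv
  rw [hfd]
  have hs : HasFDerivAt (fun y : Euc N => 2 * c * q * (k + ‖y‖ ^ 2) ^ (q-1))
      ((2 * (2*c*q) * (q-1) * (k + ‖x‖ ^ 2) ^ (q - 1 - 1)) • innerSL ℝ x) x := by
    have := hasFDerivAt_aux (2*c*q) (q-1) k x (pos x)
    convert this using 2 <;> ring
  have hG : HasFDerivAt (fun y : Euc N => (2 * c * q * (k + ‖y‖ ^ 2) ^ (q - 1)) • innerSL ℝ y) _ x :=
    hs.smul ((innerSL ℝ : Euc N →L[ℝ] Euc N →L[ℝ] ℝ)).hasFDerivAt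
  rw [hG.fderiv]
  simp only [ContinuousLinearMap.add_apply, ContinuousLinearMap.smul_apply,
    ContinuousLinearMap.smulRight_apply, ContinuousLinearMap.coe_coe, innerSL_apply_apply,
    smul_eq_mul]
  have h2 : ((innerSL ℝ) v) w = (inner ℝ v w : ℝ) := rfl
  have h3 : (k + ‖x‖ ^ 2) ^ (q - 1 - 1) = (k + ‖x‖ ^ 2) ^ (q - 2) := by ring_nf
  rw [h3, h2]; ring

lemma lapl_aux {N : ℕ} (c q k : ℝ) (hk : (0:ℝ) < k) (x : Euc N) :
    lapl (fun y : Euc N => c * (k + ‖y‖ ^ 2) ^ q) x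
      = 4*c*q*(q-1)*(k+‖x‖^2)^(q-2)*‖x‖^2 + 2*c*q*(N:ℝ)*(k+‖x‖^2)^(q-1) := by
  have hsum : ∑ i : Fin N, x i * x i = ‖x‖^2 := by
    rw [EuclideanSpace.norm_sq_eq]
    simp [sq]
  unfold lapl
  have key : ∀ i : Fin N,
      iteratedFDeriv ℝ 2 (fun y : Euc N => c * (k + ‖y‖ ^ 2) ^ q) x
        ![EuclideanSpace.single i 1, EuclideanSpace.single i 1]
      = 4*c*q*(q-1)*(k+‖x‖^2)^(q-2) * (x i * x i) + 2*c*q*(k+‖x‖^2)^(q-1) := by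
    intro i
    rw [iteratedFDeriv_two_apply]
    simp only [Matrix.cons_val_zero, Matrix.cons_val_one, Matrix.head_cons]
    rw [second_aux c q k hk]
    have h1 : (inner ℝ x (EuclideanSpace.single i (1:ℝ)) : ℝ) = x i := by
      simp [EuclideanSpace.inner_single_right]
    have h2 : (inner ℝ (EuclideanSpace.single i (1:ℝ)) (EuclideanSpace.single i (1:ℝ)) : ℝ) = 1 := by
      simp [EuclideanSpace.inner_single_right, EuclideanSpace.single_apply]
    rw [h1, h2]; ring
  rw [Finset.sum_congr rfl (fun i _ => key i)]
  rw [Finset.sum_add_distrib, ← Finset.mul_sum, hsum]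
  simp [Finset.card_univ]
  ring

lemma grad_aux {N : ℕ} (c q k : ℝ) (hk : (0:ℝ) < k) (x : Euc N) :
    gradient (fun y : Euc N => c * (k + ‖y‖ ^ 2) ^ q) x
      = (2 * c * q * (k + ‖x‖ ^ 2) ^ (q - 1)) • x := by
  have h0 : (0:ℝ) < k + ‖x‖ ^ 2 := by positivity
  have h := hasFDerivAt_aux c q k x h0
  rw [gradient, h.fderiv]
  apply ext_inner_right ℝ
  intro y
  rw [InnerProductSpace.toDual_symm_apply]
  simp [inner_smul_left]

/-- f is radially symmetric. -/
def IsRadial {N : ℕ} (f : Euc N → ℝ) : Prop := ∀ x y : Euc N, ‖x‖ = ‖y‖ → f x = f y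

set_option maxHeartbeats 1000000 in
/-- the key pointwise differential identity for the weight B̃^α,
α = (N-2)(1-m)/2 - 1, with |γ| = 1/(N-2-Nm): the quantity
(m(|x|²+k)/C*)·Δ(B̃^α) - |γ|·x·∇(B̃^α) equals the explicitly negative expression
-(k(N-4-m(N-2))N / (2(N(1-m)-2)(k+|x|²)))·B̃^α; moreover Δ(B̃^α) ≤ 0, so the same upper
bound holds with any coefficient a(x) ≥ m(|x|²+k)/C*. -/
theorem weight_differential_identity (N : ℕ) (hN : 4 < N) (m k : ℝ)
    (hm0 : 0 < m) (hm1 : m < ((N : ℝ) - 4) / ((N : ℝ) - 2)) (hk : 0 < k) :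
    (∀ x : Euc N,
      m * (‖x‖ ^ 2 + k) / Cst N m
          * lapl (fun y => BbTil N m k y ^ (((N : ℝ) - 2) * (1 - m) / 2 - 1)) x
        - (1 / ((N : ℝ) - 2 - N * m))
          * inner ℝ x (gradient (fun y => BbTil N m k y ^ (((N : ℝ) - 2) * (1 - m) / 2 - 1)) x)
      = -(k * ((N : ℝ) - 4 - m * ((N : ℝ) - 2)) * N
          / (2 * ((N : ℝ) * (1 - m) - 2) * (k + ‖x‖ ^ 2)))
          * BbTil N m k x ^ (((N : ℝ) - 2) * (1 - m) / 2 - 1)) ∧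
    (∀ x : Euc N,
      -(k * ((N : ℝ) - 4 - m * ((N : ℝ) - 2)) * N
          / (2 * ((N : ℝ) * (1 - m) - 2) * (k + ‖x‖ ^ 2)))
          * BbTil N m k x ^ (((N : ℝ) - 2) * (1 - m) / 2 - 1) < 0) ∧
    (∀ x : Euc N,
      lapl (fun y => BbTil N m k y ^ (((N : ℝ) - 2) * (1 - m) / 2 - 1)) x ≤ 0) ∧
    (∀ a : Euc N → ℝ, (∀ x, m * (‖x‖ ^ 2 + k) / Cst N m ≤ a x) →
      ∀ x : Euc N,
        a x * lapl (fun y => BbTil N m k y ^ (((N : ℝ) - 2) * (1 - m) / 2 - 1)) x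
          - (1 / ((N : ℝ) - 2 - N * m))
            * inner ℝ x
              (gradient (fun y => BbTil N m k y ^ (((N : ℝ) - 2) * (1 - m) / 2 - 1)) x)
        ≤ -(k * ((N : ℝ) - 4 - m * ((N : ℝ) - 2)) * N
            / (2 * ((N : ℝ) * (1 - m) - 2) * (k + ‖x‖ ^ 2)))
            * BbTil N m k x ^ (((N : ℝ) - 2) * (1 - m) / 2 - 1)) := by
  
  have hN4 : (4:ℝ) < (N:ℝ) := by exact_mod_cast hN
  have hN2 : (0:ℝ) < (N:ℝ) - 2 := by linarith
  have hm' : m * ((N:ℝ) - 2) < (N:ℝ) - 4 := by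
    rw [lt_div_iff₀ hN2] at hm1; linarith
  have hm1' : m < 1 := by nlinarith
  have h1m : (0:ℝ) < 1 - m := by linarith
  have hq' : (0:ℝ) < (N:ℝ) - 2 - N * m := by nlinarith
  have hCst : 0 < Cst N m := by
    have : (0:ℝ) < 2 * m * ((N:ℝ) - 2 - m * N) := by nlinarith
    exact div_pos this h1m
  obtain ⟨α, hαdef⟩ : ∃ a : ℝ, a = ((N:ℝ) - 2) * (1 - m) / 2 - 1 := ⟨_, rfl⟩
  obtain ⟨p, hpdef⟩ : ∃ a : ℝ, a = 1 / (1 - m) * α := ⟨_, rfl⟩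
  rw [← hαdef]
  have hα : 0 < α := by rw [hαdef]; nlinarith
  have hp : 0 < p := by rw [hpdef]; positivity
  have hpα : p * (1 - m) = α := by rw [hpdef]; field_simp
  have hpN : 2 * p + 2 < (N:ℝ) := by
    have key : (2*p+2-(N:ℝ))*(1-m) = -2 := by
      rw [hαdef] at hpα; linear_combination 2 * hpα
    nlinarith
  have hfun1 : ∀ y : Euc N, BbTil N m k y ^ α
      = (Cst N m ^ p) * (k + ‖y‖ ^ 2) ^ (-p) := by
    intro y
    have hy : (0:ℝ) < k + ‖y‖ ^ 2 := by positivity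
    have hdiv : (0:ℝ) ≤ Cst N m / (k + ‖y‖ ^ 2) := (div_pos hCst hy).le
    rw [BbTil, ← Real.rpow_mul hdiv, ← hpdef,
      Real.div_rpow hCst.le hy.le, Real.rpow_neg hy.le, div_eq_mul_inv]
  have hfun : (fun y : Euc N => BbTil N m k y ^ α)
      = fun y : Euc N => (Cst N m ^ p) * (k + ‖y‖ ^ 2) ^ (-p) := funext hfun1
  have hcpos : (0:ℝ) < Cst N m ^ p := Real.rpow_pos_of_pos hCst p
  have hq2 : ((N:ℝ) * (1 - m) - 2) ≠ 0 := by nlinarith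
  -- Laplacian nonpositivity
  have hlap : ∀ x : Euc N,
      lapl (fun y => BbTil N m k y ^ α) x ≤ 0 := by
    intro x
    have hh : (0:ℝ) < k + ‖x‖ ^ 2 := by positivity
    have hr2 : (0:ℝ) ≤ ‖x‖ ^ 2 := by positivity
    rw [hfun, lapl_aux _ _ _ hk x]
    have rel : (k + ‖x‖ ^ 2) ^ (-p - 1) = (k + ‖x‖ ^ 2) ^ (-p - 2) * (k + ‖x‖ ^ 2) := by
      rw [show -p - 1 = -p - 2 + 1 by ring, Real.rpow_add_one hh.ne']
    rw [rel]
    have hT2 : (0:ℝ) < (k + ‖x‖ ^ 2) ^ (-p - 2) := Real.rpow_pos_of_pos hh _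
    have hA : (0:ℝ) < Cst N m ^ p * p * ((k + ‖x‖ ^ 2) ^ (-p - 2)) :=
      mul_pos (mul_pos hcpos hp) hT2
    have hle : 2 * (p + 1) * ‖x‖ ^ 2 ≤ (N:ℝ) * (k + ‖x‖ ^ 2) := by
      nlinarith [mul_nonneg hr2 (by linarith : (0:ℝ) ≤ (N:ℝ) - (2*p+2))]
    nlinarith [mul_le_mul_of_nonneg_left hle hA.le]
  -- The identity
  have hmain : ∀ x : Euc N,
      m * (‖x‖ ^ 2 + k) / Cst N m * lapl (fun y => BbTil N m k y ^ α) x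
        - 1 / ((N:ℝ) - 2 - ↑N * m)
          * inner ℝ x (gradient (fun y => BbTil N m k y ^ α) x)
      = -(k * ((N:ℝ) - 4 - m * ((N:ℝ) - 2)) * ↑N
          / (2 * ((N:ℝ) * (1 - m) - 2) * (k + ‖x‖ ^ 2))) * BbTil N m k x ^ α := by
    intro x
    have hh : (0:ℝ) < k + ‖x‖ ^ 2 := by positivity
    rw [hfun, lapl_aux _ _ _ hk x, grad_aux _ _ _ hk x, hfun1 x]
    rw [real_inner_smul_right, real_inner_self_eq_norm_sq]
    have e1 : (k + ‖x‖ ^ 2) ^ (-p - 1) = (k + ‖x‖ ^ 2) ^ (-p) * (k + ‖x‖ ^ 2)⁻¹ := by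
      rw [show -p - 1 = -p + (-1) by ring, Real.rpow_add hh, Real.rpow_neg_one]
    have e2 : (k + ‖x‖ ^ 2) ^ (-p - 2)
        = (k + ‖x‖ ^ 2) ^ (-p) * ((k + ‖x‖ ^ 2) * (k + ‖x‖ ^ 2))⁻¹ := by
      rw [show -p - 2 = -p + (-1) + (-1) by ring, Real.rpow_add hh, Real.rpow_add hh,
        Real.rpow_neg_one, mul_assoc, ← mul_inv]
    rw [e1, e2]
    have hCeq : Cst N m = 2 * m * ((N:ℝ) - 2 - m * N) / (1 - m) := rfl
    generalize (Cst N m) ^ p = c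
    generalize (k + ‖x‖ ^ 2) ^ (-p) = H
    rw [hCeq, hpdef, hαdef]
    have hxk : (‖x‖ ^ 2 + k) ≠ 0 := by positivity
    have h2m : (2:ℝ) * m ≠ 0 := by positivity
    have hmN : ((N:ℝ) - 2 - m * N) ≠ 0 := by
      intro h; rw [mul_comm] at h; nlinarith
    field_simp [hh.ne', h1m.ne', hq'.ne', hm0.ne', hq2]
    ring
  refine ⟨hmain, ?_, hlap, ?_⟩
  · intro x
    have hh : (0:ℝ) < k + ‖x‖ ^ 2 := by positivity
    have hB : 0 < BbTil N m k x ^ α :=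
      Real.rpow_pos_of_pos (Real.rpow_pos_of_pos (div_pos hCst hh) _) _
    have hnum : (0:ℝ) < k * ((N:ℝ) - 4 - m * ((N:ℝ) - 2)) * (N:ℝ) := by
      have h1 : (0:ℝ) < (N:ℝ) - 4 - m * ((N:ℝ) - 2) := by linarith
      have h2 : (0:ℝ) < (N:ℝ) := by linarith
      positivity
    have hden : (0:ℝ) < 2 * ((N:ℝ) * (1 - m) - 2) * (k + ‖x‖ ^ 2) :=
      mul_pos (mul_pos two_pos (by nlinarith)) hh
    have : (0:ℝ) < k * ((N:ℝ) - 4 - m * ((N:ℝ) - 2)) * ↑N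
        / (2 * ((N:ℝ) * (1 - m) - 2) * (k + ‖x‖ ^ 2)) * BbTil N m k x ^ α :=
      mul_pos (div_pos hnum hden) hB
    linarith
  · intro a ha x
    have hL := hlap x
    have key := hmain x
    have h1 : a x * lapl (fun y => BbTil N m k y ^ α) x
        ≤ m * (‖x‖ ^ 2 + k) / Cst N m * lapl (fun y => BbTil N m k y ^ α) x :=
      mul_le_mul_of_nonpos_right (ha x) hL
    linarith
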